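/- arXiv:1903.06583 — 4 statements merged into one kernel-verified Lean document; each statement's English description precedes it below -/
import Mathlib

section
/- For every α ≥ 0, the function f_α : ℝⁿ → ℝ defined by f_α(x) = ‖x‖^{1+α} + (α-1)/2 if ‖x‖ ≤ 1 and f_α(x) = ((1+α)/2)‖x‖² if ‖x‖ > 1 is convex on ℝⁿ. -/
/-!
Write `f_α = φ_α ∘ ‖·‖`. A nondecreasing convex function of the norm is convex, so it suffices
that `φ_α` is nondecreasing and convex on `[0, ∞)`. Both pieces of `φ_α` take the value
`(1 + α) / 2` and have slope `1 + α` at `r = 1`, so `φ_α` is differentiable with derivative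
`(1 + α) r ^ α` on `[0, 1]` and `(1 + α) r` beyond; this derivative is nonnegative and
nondecreasing on `[0, ∞)`.
-/

open Set

theorem ConvexOn.comp_norm {E : Type*} [SeminormedAddCommGroup E] [NormedSpace ℝ E]
    {g : ℝ → ℝ} (hg : ConvexOn ℝ (Ici 0) g) (hg_mono : MonotoneOn g (Ici 0)) :
    ConvexOn ℝ univ fun x : E => g ‖x‖ := by
  refine ⟨convex_univ, fun x _ y _ a b ha hb hab => ?_⟩
  have htri : ‖a • x + b • y‖ ≤ a * ‖x‖ + b * ‖y‖ := by
    simpa only [norm_smul, Real.norm_of_nonneg ha, Real.norm_of_nonneg hb]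
      using norm_add_le (a • x) (b • y)
  calc g ‖a • x + b • y‖ ≤ g (a * ‖x‖ + b * ‖y‖) :=
        hg_mono (norm_nonneg _)
        (add_nonneg (mul_nonneg ha (norm_nonneg x)) (mul_nonneg hb (norm_nonneg y))) htri
    _ ≤ a • g ‖x‖ + b • g ‖y‖ := hg.2 (norm_nonneg x) (norm_nonneg y) ha hb hab

theorem hasDerivAt_ite_le {f g f' g' : ℝ → ℝ} {a : ℝ}
    (hf : ∀ x ≤ a, HasDerivAt f (f' x) x) (hg : ∀ x, a ≤ x → HasDerivAt g (g' x) x)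
    (hfg : f a = g a) (hfg' : f' a = g' a) (x : ℝ) :
    HasDerivAt (fun x => if x ≤ a then f x else g x) (if x ≤ a then f' x else g' x) x := by
  rcases lt_trichotomy x a with hxa | rfl | hax
  · have heq : (fun x => if x ≤ a then f x else g x) =ᶠ[nhds x] f := by
      filter_upwards [Iio_mem_nhds hxa] with t ht
      simp [(mem_Iio.mp ht).le]
    simpa [hxa.le] using (hf x hxa.le).congr_of_eventuallyEq heq
  · have hleft : HasDerivWithinAt (fun y => if y ≤ x then f y else g y) (f' x) (Iic x) x :=
      (hf x le_rfl).hasDerivWithinAt.congr (fun t ht => if_pos ht) (if_pos le_rfl)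
    have hright : HasDerivWithinAt (fun y => if y ≤ x then f y else g y) (f' x) (Ici x) x := by
      rw [hfg']
      refine (hg x le_rfl).hasDerivWithinAt.congr (fun t ht => ?_) (by simp [hfg])
      rcases (mem_Ici.mp ht).eq_or_lt with rfl | hlt
      · simp [hfg]
      · simp [not_le.mpr hlt]
    simpa [Iic_union_Ici] using (hleft.union hright).hasDerivAt (by simp)
  · have heq : (fun x => if x ≤ a then f x else g x) =ᶠ[nhds x] g := by
      filter_upwards [Ioi_mem_nhds hax] with t ht
      simp [not_le.mpr (mem_Ioi.mp ht)]
    simpa [not_le.mpr hax] using (hg x hax.le).congr_of_eventuallyEq heq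

noncomputable def fAlphaProfile (α r : ℝ) : ℝ :=
  if r ≤ 1 then r ^ (1 + α) + (α - 1) / 2 else (1 + α) / 2 * r ^ 2

noncomputable def fAlphaProfileDeriv (α r : ℝ) : ℝ :=
  if r ≤ 1 then (1 + α) * r ^ α else (1 + α) * r

section Profile

variable {α : ℝ}

theorem hasDerivAt_fAlphaProfile (hα : 0 ≤ α) (r : ℝ) :
    HasDerivAt (fAlphaProfile α) (fAlphaProfileDeriv α r) r := by
  refine hasDerivAt_ite_le (f := fun r => r ^ (1 + α) + (α - 1) / 2)
    (g := fun r => (1 + α) / 2 * r ^ 2) (f' := fun r => (1 + α) * r ^ α)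
    (g' := fun r => (1 + α) * r) (fun x _ => ?_) (fun x _ => ?_) ?_ ?_ r
  · simpa using ((Real.hasDerivAt_rpow_const (p := 1 + α) (Or.inr (by linarith))).add_const
      ((α - 1) / 2) : HasDerivAt _ _ x)
  · exact ((hasDerivAt_pow 2 x).const_mul ((1 + α) / 2)).congr_deriv (by push_cast; ring)
  · simp only [Real.one_rpow, one_pow]; ring
  · simp only [Real.one_rpow, mul_one]

theorem fAlphaProfileDeriv_nonneg (hα : 0 ≤ α) {r : ℝ} (hr : 0 ≤ r) :
    0 ≤ fAlphaProfileDeriv α r := by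
  unfold fAlphaProfileDeriv
  split_ifs <;> positivity

theorem monotoneOn_fAlphaProfileDeriv (hα : 0 ≤ α) :
    MonotoneOn (fAlphaProfileDeriv α) (Ici 0) := by
  intro a ha b hb hab
  have h1α : 0 ≤ 1 + α := by linarith
  unfold fAlphaProfileDeriv
  split_ifs with ha1 hb1 hb1
  · exact mul_le_mul_of_nonneg_left (Real.rpow_le_rpow ha hab hα) h1α
  · exact mul_le_mul_of_nonneg_left
      ((Real.rpow_le_one ha ha1 hα).trans (not_le.mp hb1).le) h1α
  · exact absurd (hab.trans hb1) ha1
  · exact mul_le_mul_of_nonneg_left hab h1α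

theorem convexOn_fAlphaProfile (hα : 0 ≤ α) : ConvexOn ℝ (Ici 0) (fAlphaProfile α) := by
  have hdiff : Differentiable ℝ (fAlphaProfile α) := fun r =>
    (hasDerivAt_fAlphaProfile hα r).differentiableAt
  refine MonotoneOn.convexOn_of_deriv (convex_Ici 0) hdiff.continuous.continuousOn
    hdiff.differentiableOn ?_
  rw [funext fun r => (hasDerivAt_fAlphaProfile hα r).deriv]
  exact (monotoneOn_fAlphaProfileDeriv hα).mono interior_subset

theorem monotoneOn_fAlphaProfile (hα : 0 ≤ α) : MonotoneOn (fAlphaProfile α) (Ici 0) :=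
  monotoneOn_of_hasDerivWithinAt_nonneg (convex_Ici 0)
    (fun r _ => (hasDerivAt_fAlphaProfile hα r).continuousAt.continuousWithinAt)
    (fun r _ => (hasDerivAt_fAlphaProfile hα r).hasDerivWithinAt)
    (fun _ hr => fAlphaProfileDeriv_nonneg hα (interior_subset hr))

end Profile

theorem fAlpha_convex_general (n : ℕ) (α : ℝ) (hα : 0 ≤ α) :
    ConvexOn ℝ Set.univ (fun x : EuclideanSpace ℝ (Fin n) =>
      if ‖x‖ ≤ 1 then ‖x‖ ^ (1 + α) + (α - 1) / 2 else ((1 + α) / 2) * ‖x‖ ^ (2 : ℕ)) :=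
  (convexOn_fAlphaProfile hα).comp_norm (monotoneOn_fAlphaProfile hα)

/-- For every `α ≥ 0`, the radial function `f_α` on `ℝⁿ`, equal to
`‖x‖^(1+α) + (α-1)/2` for `‖x‖ ≤ 1` and `((1+α)/2)‖x‖²` for `‖x‖ > 1`, is convex. -/
theorem fAlpha_convex (n : ℕ) (hn : 1 ≤ n) (α : ℝ) (hα : 0 ≤ α) :
    ConvexOn ℝ Set.univ (fun x : EuclideanSpace ℝ (Fin n) =>
      if ‖x‖ ≤ 1 then ‖x‖ ^ (1 + α) + (α - 1) / 2 else ((1 + α) / 2) * ‖x‖ ^ (2 : ℕ)) :=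
  fAlpha_convex_general n α hα
end

section
/- For every α ≥ 0, the function f_α(x) = ‖x‖^{1+α} + (α-1)/2 for ‖x‖ ≤ 1 and f_α(x) = ((1+α)/2)‖x‖² for ‖x‖ > 1 is continuously differentiable on ℝⁿ \ {0}, and for α ≥ 1 it is continuously differentiable on all of ℝⁿ. -/
open Set

noncomputable def Gfun (α : ℝ) : ℝ → ℝ :=
  fun t => if t ≤ 1 then t ^ ((1 + α) / 2) + (α - 1) / 2 else ((1 + α) / 2) * t

noncomputable def Gfun' (α : ℝ) : ℝ → ℝ :=
  fun t => if t ≤ 1 then ((1 + α) / 2) * t ^ ((1 + α) / 2 - 1) else (1 + α) / 2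

lemma hasDerivAt_Gfun {α : ℝ} {t : ℝ} (h : t ≠ 0 ∨ 1 ≤ (1 + α) / 2) :
    HasDerivAt (Gfun α) (Gfun' α t) t := by
  rcases lt_trichotomy t 1 with ht | ht | ht
  · have h1 : HasDerivAt (fun s : ℝ => s ^ ((1 + α) / 2) + (α - 1) / 2)
        (((1 + α) / 2) * t ^ ((1 + α) / 2 - 1)) t :=
      (Real.hasDerivAt_rpow_const h).add_const _
    have heq : Gfun α =ᶠ[nhds t] fun s : ℝ => s ^ ((1 + α) / 2) + (α - 1) / 2 := by
      filter_upwards [Iio_mem_nhds ht] with s hs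
      simp [Gfun, le_of_lt (mem_Iio.1 hs)]
    have := h1.congr_of_eventuallyEq heq
    simpa [Gfun', le_of_lt ht] using this
  · subst ht
    have hu : HasDerivWithinAt (Gfun α) ((1 + α) / 2) (Iic 1) 1 := by
      have h1 : HasDerivAt (fun s : ℝ => s ^ ((1 + α) / 2) + (α - 1) / 2)
          (((1 + α) / 2) * (1:ℝ) ^ ((1 + α) / 2 - 1)) 1 :=
        (Real.hasDerivAt_rpow_const (Or.inl one_ne_zero)).add_const _
      have h2 := h1.hasDerivWithinAt (s := Iic 1)
      rw [Real.one_rpow, mul_one] at h2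
      exact h2.congr (fun s hs => by simp [Gfun, (mem_Iic.1 hs)]) (by simp [Gfun])
    have hv : HasDerivWithinAt (Gfun α) ((1 + α) / 2) (Ici 1) 1 := by
      have h1 : HasDerivAt (fun s : ℝ => ((1 + α) / 2) * s) ((1 + α) / 2) 1 := by
        simpa using (hasDerivAt_id (1:ℝ)).const_mul ((1 + α) / 2)
      refine (h1.hasDerivWithinAt (s := Ici 1)).congr (fun s hs => ?_) (by simp [Gfun]; ring)
      rcases eq_or_lt_of_le (mem_Ici.1 hs) with h' | h'
      · simp [Gfun, ← h']; ring
      · simp [Gfun, not_le.2 h']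
    have h3 := (hu.union hv)
    rw [Iic_union_Ici, hasDerivWithinAt_univ] at h3
    simpa [Gfun'] using h3
  · have h1 : HasDerivAt (fun s : ℝ => ((1 + α) / 2) * s) ((1 + α) / 2) t := by
      simpa using (hasDerivAt_id t).const_mul ((1 + α) / 2)
    have heq : Gfun α =ᶠ[nhds t] fun s : ℝ => ((1 + α) / 2) * s := by
      filter_upwards [Ioi_mem_nhds ht] with s hs
      simp [Gfun, not_le.2 (mem_Ioi.1 hs)]
    have := h1.congr_of_eventuallyEq heq
    simpa [Gfun', not_le.2 ht] using this

lemma continuousAt_Gfun' {α : ℝ} {t : ℝ} (h : t ≠ 0 ∨ 1 ≤ (1 + α) / 2) :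
    ContinuousAt (Gfun' α) t := by
  have h' : t ≠ 0 ∨ 0 ≤ (1 + α) / 2 - 1 := h.imp id (fun h => by linarith)
  rcases lt_trichotomy t 1 with ht | ht | ht
  · have h1 : ContinuousAt (fun s : ℝ => ((1 + α) / 2) * s ^ ((1 + α) / 2 - 1)) t :=
      (Real.continuousAt_rpow_const t ((1 + α) / 2 - 1) h').const_mul _
    refine h1.congr ?_
    filter_upwards [Iio_mem_nhds ht] with s hs
    simp [Gfun', le_of_lt (mem_Iio.1 hs)]
  · subst ht
    have hu : ContinuousWithinAt (Gfun' α) (Iic 1) 1 := by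
      have h1 : ContinuousAt (fun s : ℝ => ((1 + α) / 2) * s ^ ((1 + α) / 2 - 1)) 1 :=
        (Real.continuousAt_rpow_const 1 ((1 + α) / 2 - 1) (Or.inl one_ne_zero)).const_mul _
      exact (h1.continuousWithinAt).congr (fun s hs => by simp [Gfun', mem_Iic.1 hs])
        (by simp [Gfun'])
    have hv : ContinuousWithinAt (Gfun' α) (Ici 1) 1 := by
      refine (continuousWithinAt_const (b := (1 + α) / 2)).congr (fun s hs => ?_)
        (by simp [Gfun'])
      rcases eq_or_lt_of_le (mem_Ici.1 hs) with h' | h'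
      · simp [Gfun', ← h']
      · simp [Gfun', not_le.2 h']
    have h3 := hu.union hv
    rwa [Iic_union_Ici, continuousWithinAt_univ] at h3
  · refine (continuousAt_const (y := (1 + α) / 2)).congr ?_
    filter_upwards [Ioi_mem_nhds ht] with s hs
    simp [Gfun', not_le.2 (mem_Ioi.1 hs)]

lemma Gfun_contDiffOn {α : ℝ} (hα : 0 ≤ α) : ContDiffOn ℝ 1 (Gfun α) (Ioi 0) := by
  rw [show (1 : WithTop ℕ∞) = 0 + 1 from rfl,
    contDiffOn_succ_iff_deriv_of_isOpen isOpen_Ioi]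
  refine ⟨fun t ht =>
    ((hasDerivAt_Gfun (Or.inl (ne_of_gt (mem_Ioi.1 ht)))).differentiableAt).differentiableWithinAt,
    by simp, ?_⟩
  rw [contDiffOn_zero]
  intro t ht
  have hne : t ≠ 0 := ne_of_gt (mem_Ioi.1 ht)
  have hc : ContinuousAt (deriv (Gfun α)) t := by
    refine (continuousAt_Gfun' (α := α) (Or.inl hne)).congr ?_
    filter_upwards [Ioi_mem_nhds (mem_Ioi.1 ht)] with s hs
    exact ((hasDerivAt_Gfun (Or.inl (ne_of_gt hs))).deriv).symm
  exact hc.continuousWithinAt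

lemma Gfun_contDiff {α : ℝ} (hα : 1 ≤ α) : ContDiff ℝ 1 (Gfun α) := by
  have hp : 1 ≤ (1 + α) / 2 := by linarith
  rw [contDiff_one_iff_deriv]
  refine ⟨fun t => (hasDerivAt_Gfun (Or.inr hp)).differentiableAt, ?_⟩
  have hd : deriv (Gfun α) = Gfun' α := funext fun t => (hasDerivAt_Gfun (Or.inr hp)).deriv
  rw [hd]
  exact continuous_iff_continuousAt.2 fun t => continuousAt_Gfun' (Or.inr hp)

lemma f_eq_G {n : ℕ} (α : ℝ) (x : EuclideanSpace ℝ (Fin n)) :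
    (if ‖x‖ ≤ 1 then ‖x‖ ^ (1 + α) + (α - 1) / 2 else ((1 + α) / 2) * ‖x‖ ^ (2 : ℕ)) =
      Gfun α (‖x‖ ^ (2 : ℕ)) := by
  have hsq : (‖x‖ ^ (2 : ℕ) : ℝ) ≤ 1 ↔ ‖x‖ ≤ 1 := by
    constructor <;> intro h <;> nlinarith [norm_nonneg x]
  have hpow : (‖x‖ ^ (2 : ℕ) : ℝ) ^ ((1 + α) / 2) = ‖x‖ ^ (1 + α) := by
    rw [← Real.rpow_natCast ‖x‖ 2, ← Real.rpow_mul (norm_nonneg x)]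
    congr 1
    ring
  by_cases h : ‖x‖ ≤ 1
  · simp [Gfun, h, hsq.2 h, hpow]
  · simp [Gfun, h, (not_iff_not.2 hsq).2 h]

/-- For every `α ≥ 0`, the radial function `f_α` is continuously differentiable
on `ℝⁿ \ {0}`, and if moreover `α ≥ 1` it is continuously differentiable on all of `ℝⁿ`. -/
theorem fAlpha_contDiff (n : ℕ) (hn : 1 ≤ n) (α : ℝ) (hα : 0 ≤ α) :
    ContDiffOn ℝ 1 (fun x : EuclideanSpace ℝ (Fin n) =>
        if ‖x‖ ≤ 1 then ‖x‖ ^ (1 + α) + (α - 1) / 2 else ((1 + α) / 2) * ‖x‖ ^ (2 : ℕ))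
      ({(0 : EuclideanSpace ℝ (Fin n))}ᶜ) ∧
    (1 ≤ α → ContDiff ℝ 1 (fun x : EuclideanSpace ℝ (Fin n) =>
        if ‖x‖ ≤ 1 then ‖x‖ ^ (1 + α) + (α - 1) / 2 else ((1 + α) / 2) * ‖x‖ ^ (2 : ℕ))) := by
  have hsq : ContDiff ℝ 1 (fun x : EuclideanSpace ℝ (Fin n) => ‖x‖ ^ (2 : ℕ)) :=
    contDiff_norm_sq ℝ
  have hfeq : (fun x : EuclideanSpace ℝ (Fin n) =>
      if ‖x‖ ≤ 1 then ‖x‖ ^ (1 + α) + (α - 1) / 2 else ((1 + α) / 2) * ‖x‖ ^ (2 : ℕ)) =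
      (Gfun α ∘ fun x : EuclideanSpace ℝ (Fin n) => ‖x‖ ^ (2 : ℕ)) :=
    funext fun x => f_eq_G α x
  rw [hfeq]
  constructor
  · have hmaps : MapsTo (fun x : EuclideanSpace ℝ (Fin n) => ‖x‖ ^ (2 : ℕ))
        ({(0 : EuclideanSpace ℝ (Fin n))}ᶜ) (Ioi 0) := by
      intro x hx
      have hx0 : (0:ℝ) < ‖x‖ := norm_pos_iff.2 (by simpa using hx)
      exact mem_Ioi.2 (by positivity)
    exact (Gfun_contDiffOn hα).comp hsq.contDiffOn hmaps
  · intro hα1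
    exact (Gfun_contDiff hα1).comp hsq
end

section
/- For 0 < ‖x‖ < 1 and α ≥ 0, the determinant of the matrix (1+α)(‖x‖^{α-1} Id_n + (α-1)‖x‖^{α-3} x ⊗ x) equals α(1+α)^n ‖x‖^{n(α-1)}. -/
/-! The matrix is `(1+α)‖x‖^(α-1) • (1 + (α-1)‖x‖⁻² • x xᵀ)`, and by the matrix determinant
lemma `det (1 + c • x xᵀ) = 1 + c‖x‖²`, which here is `1 + (α-1) = α`. -/

open Matrix

theorem Matrix.det_one_add_smul_vecMulVec {m R : Type*} [Fintype m] [DecidableEq m] [CommRing R]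
    (c : R) (u v : m → R) : det (1 + c • vecMulVec u v) = 1 + c * (v ⬝ᵥ u) := by
  rw [← smul_vecMulVec, vecMulVec_eq Unit, det_one_add_replicateCol_mul_replicateRow,
    dotProduct_smul, smul_eq_mul]

theorem EuclideanSpace.dotProduct_self_eq_norm_sq {ι : Type*} [Fintype ι]
    (x : EuclideanSpace ℝ ι) : x.ofLp ⬝ᵥ x.ofLp = ‖x‖ ^ 2 := by
  rw [← real_inner_self_eq_norm_sq, EuclideanSpace.inner_eq_star_dotProduct, star_trivial]

theorem hessian_eq_smul_one_add_smul_vecMulVec {m : Type*} [Fintype m] [DecidableEq m]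
    (α r : ℝ) (hr : 0 < r) (v : m → ℝ) :
    (Matrix.of fun i j : m =>
        (1 + α) * (r ^ (α - 1) * (if i = j then (1 : ℝ) else 0)
          + (α - 1) * r ^ (α - 3) * (v i * v j)))
      = ((1 + α) * r ^ (α - 1)) • (1 + ((α - 1) / r ^ 2) • vecMulVec v v) := by
  have hsplit : r ^ (α - 3) = r ^ (α - 1) / r ^ 2 := by
    rw [← Real.rpow_two, ← Real.rpow_sub hr]
    ring_nf
  ext i j
  simp only [of_apply, Matrix.smul_apply, Matrix.add_apply, one_apply, vecMulVec_apply, smul_eq_mul,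
    hsplit]
  ring

theorem det_hessian_formula_general (n : ℕ) (α : ℝ)
    (x : EuclideanSpace ℝ (Fin n)) (hx0 : 0 < ‖x‖) :
    (Matrix.of fun i j : Fin n =>
        (1 + α) * (‖x‖ ^ (α - 1) * (if i = j then (1 : ℝ) else 0)
          + (α - 1) * ‖x‖ ^ (α - 3) * (x i * x j))).det
      = α * (1 + α) ^ n * ‖x‖ ^ ((n : ℝ) * (α - 1)) := by
  rw [hessian_eq_smul_one_add_smul_vecMulVec α ‖x‖ hx0, det_smul, Fintype.card_fin,
    det_one_add_smul_vecMulVec, EuclideanSpace.dotProduct_self_eq_norm_sq,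
    div_mul_cancel₀ _ (pow_ne_zero 2 hx0.ne'), mul_pow, ← Real.rpow_natCast (‖x‖ ^ (α - 1)),
    ← Real.rpow_mul hx0.le]
  ring_nf

/-- For `0 < ‖x‖ < 1` and `α ≥ 0`, the determinant of
`(1+α)(‖x‖^(α-1) Id_n + (α-1)‖x‖^(α-3) x ⊗ x)` equals `α(1+α)^n ‖x‖^(n(α-1))`. -/
theorem det_hessian_formula (n : ℕ) (hn : 1 ≤ n) (α : ℝ) (hα : 0 ≤ α)
    (x : EuclideanSpace ℝ (Fin n)) (hx0 : 0 < ‖x‖) (hx1 : ‖x‖ < 1) :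
    (Matrix.of fun i j : Fin n =>
        (1 + α) * (‖x‖ ^ (α - 1) * (if i = j then (1 : ℝ) else 0)
          + (α - 1) * ‖x‖ ^ (α - 3) * (x i * x j))).det
      = α * (1 + α) ^ n * ‖x‖ ^ ((n : ℝ) * (α - 1)) :=
  det_hessian_formula_general n α x hx0
end

section
/- Let f : ℝⁿ → ℝ (n ≥ 2) be continuous with f ∈ C²(ℝⁿ \ (S_0 ∪ S_1)) where S_0 = {0}, S_1 = the unit sphere, and suppose ∇f extends to a locally bounded function continuous on ℝⁿ \ {0}, and the pointwise second derivatives ∂²_{ij} f belong to L^p_loc(ℝⁿ) for some p ≥ 1. Then f ∈ W^{2,p}_loc(ℝⁿ) and the distributional Hessian of f equals its pointwise Hessian. -/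
open MeasureTheory

/-- The pointwise second partial derivative `∂²_{ij} f`. -/
noncomputable def pd2 {n : ℕ} (f : EuclideanSpace ℝ (Fin n) → ℝ) (i j : Fin n)
    (x : EuclideanSpace ℝ (Fin n)) : ℝ :=
  fderiv ℝ (fun y => fderiv ℝ f y (EuclideanSpace.single j 1)) x (EuclideanSpace.single i 1)



set_option linter.unusedSectionVars false

section Helpers

open MeasureTheory Measure Module Set Topology RealInnerProductSpace

/-- FTC on an interval for a continuous function differentiable off a finite set. -/
lemma ftc_off_finset {h h' : ℝ → ℝ} (hc : Continuous h) (s : Finset ℝ) :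
    ∀ a b : ℝ, a ≤ b →
    (∀ t ∈ Set.Ioo a b, t ∉ s → HasDerivAt h (h' t) t) →
    IntervalIntegrable h' volume a b →
    ∫ t in a..b, h' t = h b - h a := by
  induction s using Finset.strongInduction with
  | _ s ih =>
    intro a b hab hd hi
    by_cases H : ∃ c ∈ s, c ∈ Set.Ioo a b
    · obtain ⟨c, hcs, hc1, hc2⟩ := H
      have hsub1 : Set.uIcc a c ⊆ Set.uIcc a b := by
        rw [Set.uIcc_of_le hab, Set.uIcc_of_le hc1.le]
        exact Set.Icc_subset_Icc le_rfl hc2.le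
      have hsub2 : Set.uIcc c b ⊆ Set.uIcc a b := by
        rw [Set.uIcc_of_le hab, Set.uIcc_of_le hc2.le]
        exact Set.Icc_subset_Icc hc1.le le_rfl
      have h1 : IntervalIntegrable h' volume a c := hi.mono_set hsub1
      have h2 : IntervalIntegrable h' volume c b := hi.mono_set hsub2
      have e1 := ih (s.erase c) (Finset.erase_ssubset hcs) a c hc1.le
        (fun t ht hts => hd t ⟨ht.1, ht.2.trans hc2⟩
          (fun hmem => hts (Finset.mem_erase.2 ⟨ne_of_lt ht.2, hmem⟩))) h1
      have e2 := ih (s.erase c) (Finset.erase_ssubset hcs) c b hc2.le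
        (fun t ht hts => hd t ⟨hc1.trans ht.1, ht.2⟩
          (fun hmem => hts (Finset.mem_erase.2 ⟨(ne_of_lt ht.1).symm, hmem⟩))) h2
      rw [← intervalIntegral.integral_add_adjacent_intervals h1 h2, e1, e2]
      ring
    · push_neg at H
      exact intervalIntegral.integral_eq_sub_of_hasDerivAt_of_le hab hc.continuousOn
        (fun t ht => hd t ht (fun hts => (H t hts) ht)) hi

/-- 1D integration by parts with a finite exceptional set. -/
lemma ibp_1d {u u' ψ ψ' : ℝ → ℝ} {s : Set ℝ} (hs : s.Finite)
    (hu : Continuous u) (hud : ∀ t ∉ s, HasDerivAt u (u' t) t)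
    (hψ : ∀ t, HasDerivAt ψ (ψ' t) t)
    {a b : ℝ} (hab : a ≤ b) (hsupp : ∀ t, ψ t ≠ 0 → t ∈ Set.Icc a b)
    (h1 : Integrable (fun t => u' t * ψ t)) (h2 : Integrable (fun t => u t * ψ' t)) :
    ∫ t, u t * ψ' t = - ∫ t, u' t * ψ t := by
  have hψcont : Continuous ψ := continuous_iff_continuousAt.2 fun t => (hψ t).continuousAt
  have hψ0 : ∀ t, t ∉ Set.Icc a b → ψ t = 0 := fun t ht => by
    by_contra h; exact ht (hsupp t h)
  have hψ'0 : ∀ t, t ∉ Set.Icc a b → ψ' t = 0 := by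
    intro t ht
    have hopen : IsOpen (Set.Icc a b)ᶜ := isClosed_Icc.isOpen_compl
    have heq : ψ =ᶠ[nhds t] (fun _ => (0:ℝ)) :=
      Filter.eventually_of_mem (hopen.mem_nhds ht) (fun y hy => hψ0 y hy)
    have h0 : HasDerivAt ψ 0 t := (hasDerivAt_const t (0:ℝ)).congr_of_eventuallyEq heq
    exact (hψ t).unique h0
  set h' : ℝ → ℝ := fun t => u' t * ψ t + u t * ψ' t with hh'
  have hint : Integrable h' := h1.add h2
  have key : ∫ t in (a-1)..(b+1), h' t = 0 := by
    classical
    have hftc := ftc_off_finset (hu.mul hψcont) hs.toFinset (a-1) (b+1) (by linarith)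
      (fun t _ hts => (hud t (by simpa using hts)).mul (hψ t))
      hint.intervalIntegrable
    have e1 : ψ (b+1) = 0 := hψ0 _ (by simp only [Set.mem_Icc, not_and_or]; right; linarith)
    have e2 : ψ (a-1) = 0 := hψ0 _ (by simp only [Set.mem_Icc, not_and_or]; left; linarith)
    rw [hftc, Pi.mul_apply, Pi.mul_apply, e1, e2]
    ring
  have hzero : ∀ t, t ∉ Set.Icc (a-1) (b+1) → h' t = 0 := by
    intro t ht
    have h3 : t ∉ Set.Icc a b := by
      intro hmem
      exact ht (Set.Icc_subset_Icc (by linarith) (by linarith) hmem)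
    simp [hh', hψ0 t h3, hψ'0 t h3]
  have htot : ∫ t, h' t = 0 := by
    have hset : ∫ t, h' t = ∫ t in (a-1)..(b+1), h' t := by
      rw [intervalIntegral.integral_of_le (by linarith : a - 1 ≤ b + 1),
        ← MeasureTheory.integral_Icc_eq_integral_Ioc]
      exact (setIntegral_eq_integral_of_forall_compl_eq_zero hzero).symm
    rw [hset, key]
  have hadd : ∫ t, h' t = (∫ t, u' t * ψ t) + ∫ t, u t * ψ' t := integral_add h1 h2
  rw [htot] at hadd
  linarith

/-- Integration by parts on a product space, vertical direction, with singular sets. -/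
lemma ibp_aux1 {E' : Type*} [NormedAddCommGroup E'] [NormedSpace ℝ E'] [MeasurableSpace E']
    {μ : Measure E'} [SigmaFinite μ]
    {u u' ψ ψ' : E' × ℝ → ℝ} (c : E') (hc : μ {c} = 0)
    {T : Set (E' × ℝ)} (hT : ∀ x : E', {t : ℝ | (x, t) ∈ T}.Finite)
    (hcont : ∀ x : E', x ≠ c → Continuous fun t => u (x, t))
    (hu : ∀ z ∉ T, HasLineDerivAt ℝ u (u' z) z ((0 : E'), (1:ℝ)))
    (hψ : ∀ z, HasLineDerivAt ℝ ψ (ψ' z) z ((0 : E'), (1:ℝ)))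
    {a b : ℝ} (hab : a ≤ b) (hψs : ∀ z, ψ z ≠ 0 → z.2 ∈ Set.Icc a b)
    (h1 : Integrable (fun z => u' z * ψ z) (μ.prod volume))
    (h2 : Integrable (fun z => u z * ψ' z) (μ.prod volume)) :
    ∫ z, u z * ψ' z ∂(μ.prod volume) = - ∫ z, u' z * ψ z ∂(μ.prod volume) := calc
  ∫ z, u z * ψ' z ∂(μ.prod volume)
    = ∫ x, (∫ t, u (x, t) * ψ' (x, t)) ∂μ := integral_prod _ h2
  _ = ∫ x, (- ∫ t, u' (x, t) * ψ (x, t)) ∂μ := by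
    apply integral_congr_ae
    have hcae : ∀ᵐ x ∂μ, x ≠ c := by
      rw [Filter.eventually_iff, mem_ae_iff]
      simpa [compl_setOf] using hc
    filter_upwards [h1.prod_right_ae, h2.prod_right_ae, hcae] with x h1x h2x hxc
    apply ibp_1d (hT x) (hcont x hxc) ?_ ?_ hab (fun t ht => hψs (x, t) ht) h1x h2x
    · intro t ht
      convert (hu (x, t) ht).scomp_of_eq t ((hasDerivAt_id t).add (hasDerivAt_const t (-t)))
        (by simp) <;> first | rfl | simp
    · intro t
      convert (hψ (x, t)).scomp_of_eq t ((hasDerivAt_id t).add (hasDerivAt_const t (-t)))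
        (by simp) <;> first | rfl | simp
  _ = - ∫ z, u' z * ψ z ∂(μ.prod volume) := by rw [integral_neg, integral_prod _ h1]

lemma ibp_aux2 {E' : Type*} [NormedAddCommGroup E'] [NormedSpace ℝ E'] [MeasurableSpace E']
    [BorelSpace E'] [FiniteDimensional ℝ E'] [Nontrivial E']
    {μ : Measure (E' × ℝ)} [IsAddHaarMeasure μ]
    {u u' ψ ψ' : E' × ℝ → ℝ} (c : E')
    {T : Set (E' × ℝ)} (hT : ∀ x : E', {t : ℝ | (x, t) ∈ T}.Finite)
    (hcont : ∀ x : E', x ≠ c → Continuous fun t => u (x, t))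
    (hu : ∀ z ∉ T, HasLineDerivAt ℝ u (u' z) z ((0 : E'), (1:ℝ)))
    (hψ : ∀ z, HasLineDerivAt ℝ ψ (ψ' z) z ((0 : E'), (1:ℝ)))
    {a b : ℝ} (hab : a ≤ b) (hψs : ∀ z, ψ z ≠ 0 → z.2 ∈ Set.Icc a b)
    (h1 : Integrable (fun z => u' z * ψ z) μ)
    (h2 : Integrable (fun z => u z * ψ' z) μ) :
    ∫ z, u z * ψ' z ∂μ = - ∫ z, u' z * ψ z ∂μ := by
  let ν : Measure E' := addHaar
  have A : ν.prod volume = (addHaarScalarFactor (ν.prod volume) μ) • μ :=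
    isAddLeftInvariant_eq_smul _ _
  have H1 : Integrable (fun z => u' z * ψ z) (ν.prod volume) := by
    rw [A]; exact h1.smul_measure_nnreal
  have H2 : Integrable (fun z => u z * ψ' z) (ν.prod volume) := by
    rw [A]; exact h2.smul_measure_nnreal
  rw [isAddLeftInvariant_eq_smul μ (ν.prod volume)]
  simp [ibp_aux1 c (measure_singleton c) hT hcont hu hψ hab hψs H1 H2]

/-- Integration by parts in a finite-dimensional space of dimension at least 2, along a
direction `v`, for a compactly supported `ψ` and a function `u` which is continuous off a point
`x₀` and has line derivatives off a set `T` meeting every line in direction `v` finitely. -/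
theorem key_ibp {E : Type*} [NormedAddCommGroup E] [NormedSpace ℝ E] [MeasurableSpace E]
    [BorelSpace E] [FiniteDimensional ℝ E] (μ : Measure E) [IsAddHaarMeasure μ]
    (hrank : 2 ≤ finrank ℝ E)
    {u u' ψ ψ' : E → ℝ} {v : E} (hv : v ≠ 0)
    {T : Set E} (hT : ∀ y : E, {t : ℝ | y + t • v ∈ T}.Finite)
    (x₀ : E) (hucont : ContinuousOn u {x₀}ᶜ)
    (hu : ∀ x ∉ T, HasLineDerivAt ℝ u (u' x) x v)
    (hψ : ∀ x, HasLineDerivAt ℝ ψ (ψ' x) x v)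
    (hψc : HasCompactSupport ψ)
    (h1 : Integrable (fun x => u' x * ψ x) μ) (h2 : Integrable (fun x => u x * ψ' x) μ) :
    ∫ x, u x * ψ' x ∂μ = - ∫ x, u' x * ψ x ∂μ := by
  have : Nontrivial E := nontrivial_iff.2 ⟨v, 0, hv⟩
  let n := finrank ℝ E
  let E' := Fin (n - 1) → ℝ
  have hn1 : 1 ≤ n - 1 := by omega
  haveI : Nonempty (Fin (n - 1)) := ⟨⟨0, by omega⟩⟩
  haveI : Nontrivial E' := by
    refine ⟨0, (fun _ => 1), fun h => ?_⟩
    have := congrFun h ⟨0, by omega⟩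
    exact zero_ne_one this
  obtain ⟨L, hL⟩ : ∃ L : E ≃L[ℝ] (E' × ℝ), L v = (0, 1) := by
    have : finrank ℝ (E' × ℝ) = n := by simpa [E'] using Nat.sub_add_cancel finrank_pos
    have L₀ : E ≃L[ℝ] (E' × ℝ) := (ContinuousLinearEquiv.ofFinrankEq this).symm
    obtain ⟨M, hM⟩ : ∃ M : (E' × ℝ) ≃L[ℝ] (E' × ℝ), M (L₀ v) = (0, 1) := by
      apply SeparatingDual.exists_continuousLinearEquiv_apply_eq
      · simpa using hv
      · simp
    exact ⟨L₀.trans M, by simp [hM]⟩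
  have hLsymm : L.symm (0, 1) = v := by rw [← hL]; exact L.symm_apply_apply v
  have hfib : ∀ (x : E') (t : ℝ), L.symm (x, t) = L.symm (x, 0) + t • v := by
    intro x t
    have : (x, t) = (x, (0:ℝ)) + t • ((0 : E'), (1:ℝ)) := by
      simp [Prod.ext_iff]
    rw [this, L.symm.map_add, L.symm.map_smul, hLsymm]
  let ν := Measure.map L μ
  suffices H : ∫ z, u (L.symm z) * ψ' (L.symm z) ∂ν =
      - ∫ z, u' (L.symm z) * ψ (L.symm z) ∂ν by
    have hμ : μ = Measure.map L.symm ν := by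
      simp [ν, Measure.map_map L.symm.continuous.measurable L.continuous.measurable]
    have hLc : IsClosedEmbedding (L.symm : E' × ℝ → E) := L.symm.toHomeomorph.isClosedEmbedding
    simpa [hμ, hLc.integral_map] using H
  have L_emb : MeasurableEmbedding L := L.toHomeomorph.measurableEmbedding
  -- support bounds
  obtain ⟨r, hr⟩ : ∃ r : ℝ, Prod.snd '' (L '' tsupport ψ) ⊆ Metric.closedBall 0 r := by
    have hcomp : IsCompact (Prod.snd '' (L '' tsupport ψ)) :=
      ((hψc.image L.continuous).image continuous_snd)
    exact hcomp.isBounded.subset_closedBall 0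
  set R := max r 0 with hR
  apply ibp_aux2 (μ := ν) ((L x₀).1) (T := (L.symm) ⁻¹' T) (a := -R) (b := R)
  · intro x
    have : {t : ℝ | (x, t) ∈ (L.symm) ⁻¹' T} = {t : ℝ | L.symm (x, 0) + t • v ∈ T} := by
      ext t
      rw [Set.mem_setOf_eq, Set.mem_setOf_eq, Set.mem_preimage, hfib]
    rw [this]
    exact hT _
  · intro x hx
    rw [continuous_iff_continuousAt]
    intro t
    have hne : L.symm (x, t) ≠ x₀ := by
      intro h
      apply hx
      have : L (L.symm (x, t)) = L x₀ := by rw [h]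
      rw [L.apply_symm_apply] at this
      exact congrArg Prod.fst this
    have hcu : ContinuousAt u (L.symm (x, t)) :=
      hucont.continuousAt (isOpen_compl_singleton.mem_nhds hne)
    have h2c : ContinuousAt (fun s : ℝ => L.symm (x, s)) t :=
      (L.symm.continuous.comp (Continuous.prodMk_right x)).continuousAt
    exact ContinuousAt.comp (g := u) hcu h2c
  · intro z hz
    have hz' : L.symm z ∉ T := hz
    have h := hu (L.symm z) hz'
    have hrw : u = (u ∘ L.symm) ∘ (L : E →ₗ[ℝ] (E' × ℝ)) := by ext y; simp
    rw [hrw] at h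
    convert h.of_comp using 1 <;> first | rfl | simp [← hL]
  · intro z
    have h := hψ (L.symm z)
    have hrw : ψ = (ψ ∘ L.symm) ∘ (L : E →ₗ[ℝ] (E' × ℝ)) := by ext y; simp
    rw [hrw] at h
    convert h.of_comp using 1 <;> first | rfl | simp [← hL]
  · have h0 : (0:ℝ) ≤ R := le_max_right r 0
    linarith
  · intro z hz
    have hmem : L.symm z ∈ tsupport ψ := subset_tsupport _ hz
    have : z.2 ∈ Prod.snd '' (L '' tsupport ψ) :=
      ⟨z, ⟨L.symm z, hmem, L.apply_symm_apply z⟩, rfl⟩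
    have := hr this
    simp only [Metric.mem_closedBall, Real.dist_eq, sub_zero] at this
    have habs : |z.2| ≤ R := le_trans this (le_max_left _ _)
    rw [abs_le] at habs
    exact ⟨habs.1, habs.2⟩
  · simpa [ν, L_emb.integrable_map_iff, Function.comp_def] using h1
  · simpa [ν, L_emb.integrable_map_iff, Function.comp_def] using h2

/-- A line meets `{0} ∪ sphere 0 1` in finitely many points. -/
lemma line_inter_finite {n : ℕ} {v : EuclideanSpace ℝ (Fin n)} (hv : v ≠ 0)
    (y : EuclideanSpace ℝ (Fin n)) :
    {t : ℝ | y + t • v ∈ ({0} ∪ Metric.sphere (0 : EuclideanSpace ℝ (Fin n)) 1 : Set _)}.Finite := by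
  have hsub : {t : ℝ | y + t • v ∈ ({0} ∪ Metric.sphere (0 : EuclideanSpace ℝ (Fin n)) 1 : Set _)}
      ⊆ {t : ℝ | y + t • v = 0} ∪ {t : ℝ | ‖y + t • v‖ = 1} := by
    intro t ht
    rcases ht with h | h
    · exact Or.inl h
    · right
      simpa [mem_sphere_iff_norm] using h
  refine Set.Finite.subset (Set.Finite.union ?_ ?_) hsub
  · apply Set.Subsingleton.finite
    intro s hs t ht
    have : (s - t) • v = 0 := by
      have := hs.trans ht.symm
      have h2 : s • v = t • v := by
        have := congrArg (fun z => z - y) this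
        simpa [add_sub_cancel_left] using this
      rw [sub_smul, h2]; exact _root_.sub_self _
    rcases smul_eq_zero.1 this with h | h
    · linarith [sub_eq_zero.1 h]
    · exact absurd h hv
  · set p : Polynomial ℝ := Polynomial.C (‖v‖^2) * Polynomial.X^2
      + Polynomial.C (2 * ⟪y, v⟫) * Polynomial.X + Polynomial.C (‖y‖^2 - 1) with hp
    have hpne : p ≠ 0 := by
      intro h
      have hc : p.coeff 2 = ‖v‖^2 := by
        rw [hp, Polynomial.coeff_add, Polynomial.coeff_add, Polynomial.coeff_C_mul,
          Polynomial.coeff_C_mul, Polynomial.coeff_X_pow, Polynomial.coeff_X, Polynomial.coeff_C]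
        norm_num
      rw [h] at hc
      simp only [Polynomial.coeff_zero] at hc
      exact (norm_ne_zero_iff.2 hv) (by nlinarith [norm_nonneg v])
    apply Set.Finite.subset (p.finite_setOf_isRoot hpne)
    intro t ht
    have hnorm : ‖y + t • v‖ = 1 := ht
    have hsq : ‖y + t • v‖^2 = 1 := by rw [hnorm]; norm_num
    have hexp : ‖y + t • v‖^2 = ‖y‖^2 + 2 * (t * ⟪y, v⟫) + t^2 * ‖v‖^2 := by
      rw [norm_add_sq_real, real_inner_smul_right, norm_smul]
      simp only [Real.norm_eq_abs, mul_pow, sq_abs]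
      try ring
    show p.IsRoot t
    simp only [hp, Polynomial.IsRoot, Polynomial.eval_add, Polynomial.eval_mul,
      Polynomial.eval_C, Polynomial.eval_pow, Polynomial.eval_X]
    nlinarith [hsq, hexp]

/-- Locally bounded functions are bounded on compact sets. -/
lemma bdd_on_compact {α F : Type*} [TopologicalSpace α] [SeminormedAddCommGroup F]
    {g : α → F} (hgb : ∀ x, ∃ C : ℝ, ∀ᶠ y in nhds x, ‖g y‖ ≤ C)
    {K : Set α} (hK : IsCompact K) : ∃ C, ∀ x ∈ K, ‖g x‖ ≤ C := by
  classical
  choose C hC using hgb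
  obtain ⟨t, ht⟩ := hK.elim_nhds_subcover' (fun x _ => {y | ‖g y‖ ≤ C x}) (fun x hx => hC x)
  obtain ⟨M, hM⟩ := (t.image fun x => C x.1).exists_le
  refine ⟨M, fun x hx => ?_⟩
  obtain ⟨y, hy⟩ := Set.mem_iUnion.1 (ht hx)
  obtain ⟨hyt, hxy⟩ := Set.mem_iUnion.1 hy
  exact le_trans hxy (hM _ (Finset.mem_image_of_mem _ hyt))

variable {E : Type*} [NormedAddCommGroup E] [NormedSpace ℝ E] [MeasurableSpace E]
  [BorelSpace E] [FiniteDimensional ℝ E] {μ : Measure E} [IsFiniteMeasureOnCompacts μ]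

lemma isFiniteRestrict {K : Set E} (hK : IsCompact K) : IsFiniteMeasure (μ.restrict K) :=
  ⟨by rw [Measure.restrict_apply_univ]; exact hK.measure_lt_top⟩

/-- If `u` is integrable on the support of a continuous compactly supported `ψ`,
then `u * ψ` is integrable. -/
lemma integrable_mul_of_integrableOn {u ψ : E → ℝ}
    (hψ : Continuous ψ) (hψc : HasCompactSupport ψ)
    (hint : IntegrableOn u (tsupport ψ) μ) : Integrable (fun x => u x * ψ x) μ := by
  obtain ⟨C, hC⟩ := hψc.exists_bound_of_continuous hψ
  have h1 : IntegrableOn (fun x => u x * ψ x) (tsupport ψ) μ := by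
    have := hint.bdd_mul (hψ.aestronglyMeasurable.restrict) (Filter.Eventually.of_forall fun x => hC x)
    exact this.congr (Filter.Eventually.of_forall fun x => mul_comm _ _)
  have heq : (fun x => u x * ψ x) = Set.indicator (tsupport ψ) (fun x => u x * ψ x) := by
    ext x
    by_cases hx : x ∈ tsupport ψ
    · rw [Set.indicator_of_mem hx]
    · rw [Set.indicator_of_notMem hx, image_eq_zero_of_notMem_tsupport hx, mul_zero]
  rw [heq, integrable_indicator_iff (isClosed_tsupport ψ).measurableSet]
  exact h1

/-- A measurable, locally bounded function is integrable on compact sets. -/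
lemma integrableOn_of_bdd {u : E → ℝ} {K : Set E} (hK : IsCompact K)
    (hm : AEStronglyMeasurable u μ) {C : ℝ} (hC : ∀ x ∈ K, ‖u x‖ ≤ C) :
    IntegrableOn u K μ := by
  haveI := isFiniteRestrict (μ := μ) hK
  apply MemLp.integrable (le_refl 1)
  apply MemLp.of_bound hm.restrict C
  exact (ae_restrict_iff' hK.isClosed.measurableSet).2 (Filter.Eventually.of_forall hC)

end Helpers


open Set Module in
/-- if `f : ℝⁿ → ℝ` is continuous, `C²` away from `{0} ∪ S^{n-1}`, its gradient
extends to a locally bounded function `g` continuous away from `0`, and its pointwise second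
derivatives are in `L^p_loc`, then `f ∈ W^{2,p}_loc` and the distributional Hessian of `f`
coincides with its pointwise Hessian, i.e. `∫ f ∂²_{ij}η = ∫ η ∂²_{ij}f` for all test `η`. -/
theorem sobolev_regularity (n : ℕ) (hn : 2 ≤ n) (p : ℝ) (hp : 1 ≤ p)
    (f : EuclideanSpace ℝ (Fin n) → ℝ) (hf : Continuous f)
    (S : Set (EuclideanSpace ℝ (Fin n)))
    (hS : S = {0} ∪ Metric.sphere (0 : EuclideanSpace ℝ (Fin n)) 1)
    (hf2 : ContDiffOn ℝ 2 f Sᶜ)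
    (g : EuclideanSpace ℝ (Fin n) → (EuclideanSpace ℝ (Fin n) →L[ℝ] ℝ))
    (hgc : ContinuousOn g ({(0 : EuclideanSpace ℝ (Fin n))}ᶜ))
    (hgb : ∀ x, ∃ C : ℝ, ∀ᶠ y in nhds x, ‖g y‖ ≤ C)
    (hgf : ∀ x ∉ S, g x = fderiv ℝ f x)
    (hH : ∀ i j, ∀ K : Set (EuclideanSpace ℝ (Fin n)), IsCompact K →
      MemLp (pd2 f i j) (ENNReal.ofReal p) (volume.restrict K)) :
    (∀ K : Set (EuclideanSpace ℝ (Fin n)), IsCompact K →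
      MemLp f (ENNReal.ofReal p) (volume.restrict K) ∧
      MemLp g (ENNReal.ofReal p) (volume.restrict K)) ∧
    (∀ η : EuclideanSpace ℝ (Fin n) → ℝ, ContDiff ℝ (⊤ : ℕ∞) η → HasCompactSupport η → ∀ i j,
      ∫ x, f x * pd2 η i j x = ∫ x, η x * pd2 f i j x) := by
  subst hS
  set S : Set (EuclideanSpace ℝ (Fin n)) :=
    {0} ∪ Metric.sphere (0 : EuclideanSpace ℝ (Fin n)) 1 with hS
  haveI : Nonempty (Fin n) := ⟨⟨0, by omega⟩⟩
  haveI hnt : Nontrivial (EuclideanSpace ℝ (Fin n)) := by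
    refine ⟨EuclideanSpace.single ⟨0, by omega⟩ (1:ℝ), 0, fun h => ?_⟩
    have h1 : ‖EuclideanSpace.single (⟨0, by omega⟩ : Fin n) (1:ℝ)‖ = 1 := by
      simp [EuclideanSpace.norm_single]
    rw [h] at h1
    simp at h1
  have hSclosed : IsClosed S := isClosed_singleton.union Metric.isClosed_sphere
  have hSopen : IsOpen Sᶜ := hSclosed.isOpen_compl
  have h0ae : ∀ᵐ x ∂(volume : Measure (EuclideanSpace ℝ (Fin n))),
      x ∈ ({(0 : EuclideanSpace ℝ (Fin n))}ᶜ : Set _) := by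
    have h0 : (volume : Measure (EuclideanSpace ℝ (Fin n))) {0} = 0 := measure_singleton _
    rw [Filter.eventually_iff, mem_ae_iff]
    simpa [compl_setOf] using h0
  have hg_aesm : AEStronglyMeasurable g volume := by
    have := hgc.aestronglyMeasurable (μ := (volume : Measure (EuclideanSpace ℝ (Fin n))))
      isOpen_compl_singleton.measurableSet
    rwa [Measure.restrict_eq_self_of_ae_mem h0ae] at this
  have hrank : 2 ≤ finrank ℝ (EuclideanSpace ℝ (Fin n)) := by
    rw [finrank_euclideanSpace_fin]; exact hn
  have hsingle_ne : ∀ k : Fin n, (EuclideanSpace.single k (1:ℝ)) ≠ 0 := by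
    intro k h
    have h1 : ‖EuclideanSpace.single k (1:ℝ)‖ = 1 := by simp [EuclideanSpace.norm_single]
    rw [h] at h1; simp at h1
  have hTfin : ∀ (v : EuclideanSpace ℝ (Fin n)), v ≠ 0 →
      ∀ y : EuclideanSpace ℝ (Fin n), {t : ℝ | y + t • v ∈ S}.Finite := by
    intro v hv y
    exact line_inter_finite hv y
  have hGaesm : ∀ w : EuclideanSpace ℝ (Fin n),
      AEStronglyMeasurable (fun x => g x w) volume := by
    intro w
    exact (ContinuousLinearMap.apply ℝ ℝ w).continuous.comp_aestronglyMeasurable hg_aesm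
  have hGint : ∀ (w : EuclideanSpace ℝ (Fin n)) (ψ : EuclideanSpace ℝ (Fin n) → ℝ),
      Continuous ψ → HasCompactSupport ψ →
      Integrable (fun x => g x w * ψ x) volume := by
    intro w ψ hψ hψc
    apply integrable_mul_of_integrableOn hψ hψc
    obtain ⟨C, hC⟩ := bdd_on_compact hgb hψc
    refine integrableOn_of_bdd hψc (hGaesm w) (C := C * ‖w‖) fun x hx => ?_
    calc ‖g x w‖ ≤ ‖g x‖ * ‖w‖ := (g x).le_opNorm w
    _ ≤ C * ‖w‖ := by
      have := hC x hx
      have h2 : (0:ℝ) ≤ ‖w‖ := norm_nonneg w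
      nlinarith
  constructor
  · intro K hK
    haveI := isFiniteRestrict (μ := (volume : Measure (EuclideanSpace ℝ (Fin n)))) hK
    constructor
    · obtain ⟨C, hC⟩ := hK.exists_bound_of_continuousOn hf.continuousOn
      exact MemLp.of_bound hf.aestronglyMeasurable.restrict C
        ((ae_restrict_iff' hK.isClosed.measurableSet).2 (Filter.Eventually.of_forall hC))
    · obtain ⟨C, hC⟩ := bdd_on_compact hgb hK
      exact MemLp.of_bound hg_aesm.restrict C
        ((ae_restrict_iff' hK.isClosed.measurableSet).2 (Filter.Eventually.of_forall hC))
  · intro η hη hηc i j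
    have hη1 : Differentiable ℝ η := hη.differentiable (by simp)
    have hDη : ContDiff ℝ 2 (fderiv ℝ η) := hη.fderiv_right (WithTop.coe_le_coe.2 le_top)
    have hχ : ContDiff ℝ 2 (fun x => fderiv ℝ η x (EuclideanSpace.single i 1)) :=
      hDη.clm_apply contDiff_const
    have hχc : HasCompactSupport (fun x => fderiv ℝ η x (EuclideanSpace.single i 1)) :=
      hηc.fderiv_apply ℝ (EuclideanSpace.single i 1)
    have hpd2cont : Continuous (pd2 η j i) := by
      have h1 : ContDiff ℝ 1
          (fderiv ℝ (fun x => fderiv ℝ η x (EuclideanSpace.single i 1))) :=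
        hχ.fderiv_right (by norm_num)
      exact (h1.clm_apply (contDiff_const (c := EuclideanSpace.single j 1))).continuous
    have hpd2supp : HasCompactSupport (pd2 η j i) := hχc.fderiv_apply ℝ _
    have hsymm : ∀ x, pd2 η i j x = pd2 η j i x := by
      intro x
      have hd2 : DifferentiableAt ℝ (fderiv ℝ η) x :=
        (hDη.differentiable (by norm_num)).differentiableAt
      have hflip : ∀ w : EuclideanSpace ℝ (Fin n), fderiv ℝ (fun y => fderiv ℝ η y w) x
          = (fderiv ℝ (fderiv ℝ η) x).flip w := by
        intro w
        rw [fderiv_clm_apply hd2 (differentiableAt_const _)]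
        simp
      have hsym : IsSymmSndFDerivAt ℝ η x := (hη.contDiffAt).isSymmSndFDerivAt (by rw [minSmoothness_of_isRCLikeNormedField]; exact WithTop.coe_le_coe.2 le_top)
      show fderiv ℝ (fun y => fderiv ℝ η y (EuclideanSpace.single j 1)) x
          (EuclideanSpace.single i 1)
        = fderiv ℝ (fun y => fderiv ℝ η y (EuclideanSpace.single i 1)) x
          (EuclideanSpace.single j 1)
      rw [hflip, hflip]
      simp only [ContinuousLinearMap.flip_apply]
      exact hsym _ _
    have ibp1 : ∫ x, f x * pd2 η j i x
        = - ∫ x, g x (EuclideanSpace.single j 1) * fderiv ℝ η x (EuclideanSpace.single i 1) := by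
      apply key_ibp volume hrank (hsingle_ne j) (T := S)
        (hTfin _ (hsingle_ne j)) 0 hf.continuousOn
      · intro x hx
        have hfd : DifferentiableAt ℝ f x :=
          (hf2.contDiffAt (hSopen.mem_nhds hx)).differentiableAt two_ne_zero
        have := hfd.hasFDerivAt.hasLineDerivAt (EuclideanSpace.single j 1)
        rw [hgf x hx]
        exact this
      · intro x
        have hd : DifferentiableAt ℝ (fun y => fderiv ℝ η y (EuclideanSpace.single i 1)) x :=
          (hχ.differentiable two_ne_zero).differentiableAt
        exact hd.hasFDerivAt.hasLineDerivAt (EuclideanSpace.single j 1)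
      · exact hχc
      · exact hGint _ _ hχ.continuous hχc
      · exact ((hf.mul hpd2cont).integrable_of_hasCompactSupport hpd2supp.mul_left)
    have ibp2 : ∫ x, g x (EuclideanSpace.single j 1) * fderiv ℝ η x (EuclideanSpace.single i 1)
        = - ∫ x, pd2 f i j x * η x := by
      apply key_ibp volume hrank (hsingle_ne i) (T := S) (hTfin _ (hsingle_ne i)) 0
        ((ContinuousLinearMap.apply ℝ ℝ (EuclideanSpace.single j 1)).continuous.comp_continuousOn
          hgc)
      · intro x hx
        have hmem : Sᶜ ∈ nhds x := hSopen.mem_nhds hx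
        have hfd1 : ContDiffOn ℝ 1 (fderiv ℝ f) Sᶜ := by
          have hf2' : ContDiffOn ℝ ((1:WithTop ℕ∞)+1) f Sᶜ := hf2.of_le (by norm_num)
          exact ((contDiffOn_succ_iff_fderiv_of_isOpen hSopen).1 hf2').2.2
        have hD : DifferentiableAt ℝ (fderiv ℝ f) x :=
          (hfd1.contDiffAt hmem).differentiableAt one_ne_zero
        have hφ : DifferentiableAt ℝ (fun y => fderiv ℝ f y (EuclideanSpace.single j 1)) x :=
          hD.clm_apply (differentiableAt_const _)
        have hloc : (fun y => g y (EuclideanSpace.single j 1)) =ᶠ[nhds x]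
            (fun y => fderiv ℝ f y (EuclideanSpace.single j 1)) :=
          Filter.eventually_of_mem hmem (fun y hy => by
            show g y (EuclideanSpace.single j 1) = fderiv ℝ f y (EuclideanSpace.single j 1)
            rw [hgf y hy])
        have hGder := hφ.hasFDerivAt.congr_of_eventuallyEq hloc
        exact hGder.hasLineDerivAt (EuclideanSpace.single i 1)
      · intro x
        exact (hη1 x).hasFDerivAt.hasLineDerivAt (EuclideanSpace.single i 1)
      · exact hηc
      · apply integrable_mul_of_integrableOn hη.continuous hηc
        haveI := isFiniteRestrict (μ := (volume : Measure (EuclideanSpace ℝ (Fin n)))) hηc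
        exact (hH i j (tsupport η) hηc).integrable (ENNReal.one_le_ofReal.2 hp)
      · exact hGint _ _ hχ.continuous hχc
    calc ∫ x, f x * pd2 η i j x = ∫ x, f x * pd2 η j i x := by
          apply integral_congr_ae
          exact Filter.Eventually.of_forall fun x => by
            show f x * pd2 η i j x = f x * pd2 η j i x
            rw [hsymm x]
    _ = - ∫ x, g x (EuclideanSpace.single j 1) * fderiv ℝ η x (EuclideanSpace.single i 1) := ibp1
    _ = ∫ x, pd2 f i j x * η x := by rw [ibp2, neg_neg]
    _ = ∫ x, η x * pd2 f i j x :=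
          integral_congr_ae (Filter.Eventually.of_forall fun x => by
            show pd2 f i j x * η x = η x * pd2 f i j x
            exact mul_comm _ _)
end
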